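/- arXiv:1304.5822 — 3 statements merged into one kernel-verified Lean document; each statement's English description precedes it below -/
import Mathlib

section
/- Quantitative bounds at the fixed point: assume d_0 = 1 and let γ = min(1 − max_{1 ≤ i ≤ n} d_i, 1/(n+2)). Then the unique fixed point x* satisfies, for every i = 1,…,n: x*_i ≤ 1 − γ^{4n} and w*_i ≥ d_i + γ^{4n+1}, where w*_i = ∏_{j=1}^{i} x*_j. -/
/-- `pathW d x i` is the value `w_i = d_0 · ∏_{j=1}^{i} x_j` reaching node `i`
in a path bargaining instance with values `d` and shares `x`. -/
noncomputable def pathW (d x : ℕ → ℝ) (i : ℕ) : ℝ :=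
  d 0 * ∏ j ∈ Finset.Icc 1 i, x j

/-- A share vector: `x_i ∈ [0,1]` for `i = 1,…,n`. -/
def IsShareVector (n : ℕ) (x : ℕ → ℝ) : Prop :=
  ∀ i, 1 ≤ i → i ≤ n → 0 ≤ x i ∧ x i ≤ 1

/-- A fixed point of the path bargaining equations
`(1 − x_i)·w_{i−1} = (1 − x_{i+1})·(x_i·w_{i−1} − d_i)` for `i = 1,…,n`,
with the convention `x_{n+1} = 0`. -/
def IsPathFixedPoint (n : ℕ) (d x : ℕ → ℝ) : Prop :=
  IsShareVector n x ∧
  ∀ i, 1 ≤ i → i ≤ n →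
    (1 - x i) * pathW d x (i - 1) =
      (1 - (if i = n then 0 else x (i + 1))) * (x i * pathW d x (i - 1) - d i)


/-!
Write `w_i = pathW d x i`, `g_k = w_k - w_{k+1}` for the gaps and `w_i - d_i` for the surpluses.
At node `k + 1` the bargaining equation reads `g_k = (1 - x_{k+2})·(w_{k+1} - d_{k+1})`, and since
`g_{k+1} = (1 - x_{k+2})·w_{k+1}` this gives `g_k·w_{k+1} = g_{k+1}·(w_{k+1} - d_{k+1})`.
So the gaps increase along the path and `1 - w_{k+1} ≤ (k+1)·g_k`, which is incompatible with a
surplus below `γ³` because `d_{k+1} ≤ 1 - γ` and `γ ≤ 1/(n+2)`. Going backwards from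
`g_{n-1} = w_n - d_n`, the same identity then gives `g_k ≥ γ^{3(n-k)}`, while
`1 - x_{k+1} ≥ g_k`.
-/

theorem pathW_zero (d x : ℕ → ℝ) : pathW d x 0 = d 0 := by
  simp [pathW]

theorem pathW_succ (d x : ℕ → ℝ) (k : ℕ) : pathW d x (k + 1) = x (k + 1) * pathW d x k := by
  rw [pathW, pathW, Finset.prod_Icc_succ_top (Nat.le_add_left 1 k)]
  ring

namespace IsShareVector

variable {n : ℕ} {d x : ℕ → ℝ}

theorem pathW_nonneg (hx : IsShareVector n x) (hd0 : 0 ≤ d 0) {i : ℕ} (hi : i ≤ n) :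
    0 ≤ pathW d x i :=
  mul_nonneg hd0 <| Finset.prod_nonneg fun j hj ↦
    (hx j (Finset.mem_Icc.1 hj).1 ((Finset.mem_Icc.1 hj).2.trans hi)).1

theorem pathW_le (hx : IsShareVector n x) (hd0 : 0 ≤ d 0) {i : ℕ} (hi : i ≤ n) :
    pathW d x i ≤ d 0 :=
  mul_le_of_le_one_right hd0 <| Finset.prod_le_one
    (fun j hj ↦ (hx j (Finset.mem_Icc.1 hj).1 ((Finset.mem_Icc.1 hj).2.trans hi)).1)
    (fun j hj ↦ (hx j (Finset.mem_Icc.1 hj).1 ((Finset.mem_Icc.1 hj).2.trans hi)).2)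

theorem pathW_succ_le (hx : IsShareVector n x) (hd0 : 0 ≤ d 0) {k : ℕ} (hk : k + 1 ≤ n) :
    pathW d x (k + 1) ≤ pathW d x k := by
  rw [pathW_succ]
  exact mul_le_of_le_one_left (hx.pathW_nonneg hd0 (by omega)) (hx (k + 1) (by omega) hk).2

theorem share_le_one_sub_gap (hx : IsShareVector n x) (hd0 : 0 ≤ d 0) (hd01 : d 0 ≤ 1)
    {k : ℕ} (hk : k + 1 ≤ n) :
    x (k + 1) ≤ 1 - (pathW d x k - pathW d x (k + 1)) := by
  have hw := (hx.pathW_le hd0 (by omega : k ≤ n)).trans hd01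
  have hxk := hx (k + 1) (by omega) hk
  rw [pathW_succ]
  nlinarith

end IsShareVector

namespace IsPathFixedPoint

variable {n : ℕ} {d x : ℕ → ℝ}

theorem exists_gap_eq (hx : IsPathFixedPoint n d x) {k : ℕ} (hk : k + 1 ≤ n) :
    ∃ y ∈ Set.Icc (0 : ℝ) 1,
      pathW d x k - pathW d x (k + 1) = y * (pathW d x (k + 1) - d (k + 1)) := by
  have h := hx.2 (k + 1) (by omega) hk
  simp only [Nat.add_sub_cancel] at h
  refine ⟨1 - (if k + 1 = n then 0 else x (k + 1 + 1)), ?_, ?_⟩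
  · split_ifs
    · simp
    · have := hx.1 (k + 2) (by omega) (by omega)
      constructor <;> linarith
  · rw [pathW_succ, ← h]
    ring

theorem gap_eq_surplus_of_eq (hx : IsPathFixedPoint n d x) {k : ℕ} (hk : k + 1 = n) :
    pathW d x k - pathW d x (k + 1) = pathW d x (k + 1) - d (k + 1) := by
  have h := hx.2 (k + 1) (by omega) hk.le
  simp only [Nat.add_sub_cancel, if_pos hk] at h
  rw [pathW_succ]
  linarith

theorem gap_mul_pathW_eq (hx : IsPathFixedPoint n d x) {k : ℕ} (hk : k + 2 ≤ n) :
    (pathW d x k - pathW d x (k + 1)) * pathW d x (k + 1) =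
      (pathW d x (k + 1) - pathW d x (k + 2)) * (pathW d x (k + 1) - d (k + 1)) := by
  have h := hx.2 (k + 1) (by omega) (by omega)
  simp only [Nat.add_sub_cancel, if_neg (show k + 1 ≠ n by omega)] at h
  rw [pathW_succ d x (k + 1), pathW_succ d x k]
  linear_combination (x (k + 1) * pathW d x k) * h

theorem gap_le_surplus (hx : IsPathFixedPoint n d x) {k : ℕ} (hk : k + 1 ≤ n)
    (hg : 0 < pathW d x k - pathW d x (k + 1)) :
    pathW d x k - pathW d x (k + 1) ≤ pathW d x (k + 1) - d (k + 1) := by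
  obtain ⟨y, ⟨hy0, hy1⟩, h⟩ := hx.exists_gap_eq hk
  rw [h] at hg ⊢
  have he : 0 < pathW d x (k + 1) - d (k + 1) := pos_of_mul_pos_right hg hy0
  exact mul_le_of_le_one_left he.le hy1

theorem pathW_pos (hx : IsPathFixedPoint n d x) (hd0 : 0 < d 0)
    (hd : ∀ j, 1 ≤ j → j ≤ n → 0 ≤ d j) {i : ℕ} (hi : i ≤ n) : 0 < pathW d x i := by
  induction i with
  | zero => rwa [pathW_zero]
  | succ k ih =>
    have hwk := ih (by omega)
    -- a zero share would leave the gap `w_k` equal to `-y * d_{k+1} ≤ 0`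
    refine (hx.1.pathW_nonneg hd0.le hi).lt_of_ne fun hw ↦ ?_
    obtain ⟨y, ⟨hy0, -⟩, h⟩ := hx.exists_gap_eq hi
    rw [← hw] at h
    nlinarith [mul_nonneg hy0 (hd (k + 1) (by omega) hi)]

theorem gap_le_gap_succ (hx : IsPathFixedPoint n d x) (hd0 : 0 < d 0)
    (hd : ∀ j, 1 ≤ j → j ≤ n → 0 ≤ d j) {k : ℕ} (hk : k + 2 ≤ n) :
    pathW d x k - pathW d x (k + 1) ≤ pathW d x (k + 1) - pathW d x (k + 2) := by
  have hw := hx.pathW_pos hd0 hd (by omega : k + 1 ≤ n)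
  have hg := sub_nonneg.2 (hx.1.pathW_succ_le hd0.le hk)
  have h := hx.gap_mul_pathW_eq hk
  nlinarith [mul_nonneg hg (hd (k + 1) (by omega) (by omega))]

theorem sub_pathW_le_mul_gap (hx : IsPathFixedPoint n d x) (hd0 : 0 < d 0)
    (hd : ∀ j, 1 ≤ j → j ≤ n → 0 ≤ d j) {k : ℕ} (hk : k + 1 ≤ n) :
    d 0 - pathW d x (k + 1) ≤ (k + 1) * (pathW d x k - pathW d x (k + 1)) := by
  induction k with
  | zero => simp [pathW_zero]
  | succ k ih =>
    have := hx.gap_le_gap_succ hd0 hd hk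
    push_cast
    nlinarith [ih (by omega)]

theorem pow_three_le_surplus (hx : IsPathFixedPoint n d x) (hd0 : d 0 = 1)
    (hd : ∀ j, 1 ≤ j → j ≤ n → 0 ≤ d j) {γ : ℝ} (hγ0 : 0 < γ) (hγn : γ * (n + 2) ≤ 1)
    (hγd : ∀ j, 1 ≤ j → j ≤ n → d j ≤ 1 - γ) {k : ℕ} (hk : k + 1 ≤ n) :
    γ ^ 3 ≤ pathW d x (k + 1) - d (k + 1) := by
  -- Otherwise `γ - γ³ < 1 - w_{k+1} ≤ (k+1)·g_k ≤ n·(w_{k+1} - d_{k+1}) < n·γ³`,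
  -- i.e. `1 < (n+1)·γ²`.
  by_contra! he
  have hkn : (k : ℝ) + 1 ≤ n := by exact_mod_cast hk
  have hγ1 : γ ≤ 1 := by nlinarith
  have hdrop : γ - γ ^ 3 < 1 - pathW d x (k + 1) := by
    nlinarith [hγd (k + 1) (by omega) hk]
  have htel := hx.sub_pathW_le_mul_gap (by rw [hd0]; norm_num) hd hk
  rw [hd0] at htel
  have hg : 0 < pathW d x k - pathW d x (k + 1) := by
    by_contra! hg
    nlinarith [pow_le_pow_of_le_one hγ0.le hγ1 (by norm_num : 1 ≤ 3)]
  have hge := hx.gap_le_surplus hk hg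
  have hlt : γ < (n + 1) * γ ^ 3 := by
    nlinarith [mul_le_mul_of_nonneg_left hge (by positivity : (0 : ℝ) ≤ k + 1),
      mul_le_mul_of_nonneg_right hkn (by positivity : (0 : ℝ) ≤ γ ^ 3)]
  have hsq : (n + 1) * γ ^ 2 ≤ 1 := by nlinarith
  nlinarith

theorem pow_le_gap (hx : IsPathFixedPoint n d x) (hd0 : 0 ≤ d 0) (hd01 : d 0 ≤ 1)
    {ε : ℝ} (hε : 0 ≤ ε) (he : ∀ k, k + 1 ≤ n → ε ≤ pathW d x (k + 1) - d (k + 1))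
    {k : ℕ} (hk : k + 1 ≤ n) :
    ε ^ (n - k) ≤ pathW d x k - pathW d x (k + 1) := by
  suffices h : ∀ m k, k + 1 + m = n → ε ^ (m + 1) ≤ pathW d x k - pathW d x (k + 1) by
    simpa [show n - k = n - (k + 1) + 1 by omega] using h (n - (k + 1)) k (by omega)
  intro m
  induction m with
  | zero => exact fun k hk ↦ by simpa [hx.gap_eq_surplus_of_eq hk] using he k hk.le
  | succ m ih =>
    intro k hk
    have hnext := ih (k + 1) (by omega)
    have hg := sub_nonneg.2 (hx.1.pathW_succ_le hd0 (by omega : k + 1 ≤ n))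
    have hw := (hx.1.pathW_le hd0 (by omega : k + 1 ≤ n)).trans hd01
    calc ε ^ (m + 1 + 1) = ε ^ (m + 1) * ε := pow_succ ε (m + 1)
      _ ≤ (pathW d x (k + 1) - pathW d x (k + 2)) * (pathW d x (k + 1) - d (k + 1)) :=
          mul_le_mul hnext (he k (by omega)) hε ((pow_nonneg hε _).trans hnext)
      _ = (pathW d x k - pathW d x (k + 1)) * pathW d x (k + 1) :=
          (hx.gap_mul_pathW_eq (by omega)).symm
      _ ≤ pathW d x k - pathW d x (k + 1) := mul_le_of_le_one_right hg hw

end IsPathFixedPoint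

/-- Quantitative bounds at the fixed point, with `d 0 = 1`. -/
theorem fixed_point_quantitative_bounds (n : ℕ) (hn : 1 ≤ n) (d : ℕ → ℝ)
    (hd0 : d 0 = 1) (hd : ∀ j, 1 ≤ j → j ≤ n → 0 ≤ d j ∧ d j < d 0)
    (x : ℕ → ℝ) (hx : IsPathFixedPoint n d x)
    (γ : ℝ)
    (hγ : γ = min (1 - (Finset.Icc 1 n).sup' (Finset.nonempty_Icc.mpr hn) d)
      (1 / ((n : ℝ) + 2))) :
    ∀ i, 1 ≤ i → i ≤ n →
      x i ≤ 1 - γ ^ (4 * n) ∧ d i + γ ^ (4 * n + 1) ≤ pathW d x i := by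
  have hd_nonneg : ∀ j, 1 ≤ j → j ≤ n → 0 ≤ d j := fun j hj hjn ↦ (hd j hj hjn).1
  have hγd : ∀ j, 1 ≤ j → j ≤ n → d j ≤ 1 - γ := fun j hj hjn ↦ by
    have := Finset.le_sup' d (Finset.mem_Icc.2 ⟨hj, hjn⟩)
    linarith [hγ ▸ min_le_left _ _]
  have hγ0 : 0 < γ := by
    obtain ⟨j, hj, hjmax⟩ := Finset.exists_mem_eq_sup' (Finset.nonempty_Icc.mpr hn) d
    rw [Finset.mem_Icc] at hj
    rw [hγ, hjmax, lt_min_iff]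
    exact ⟨by linarith [(hd j hj.1 hj.2).2], by positivity⟩
  have hγn : γ * (n + 2) ≤ 1 := (le_div_iff₀ (by positivity)).1 (hγ ▸ min_le_right _ _)
  have hγ1 : γ ≤ 1 := by nlinarith
  have he k (hk : k + 1 ≤ n) : γ ^ 3 ≤ pathW d x (k + 1) - d (k + 1) :=
    hx.pow_three_le_surplus hd0 hd_nonneg hγ0 hγn hγd hk
  intro i hi hin
  obtain ⟨k, rfl⟩ : ∃ k, i = k + 1 := ⟨i - 1, by omega⟩
  constructor
  · calc x (k + 1) ≤ 1 - (pathW d x k - pathW d x (k + 1)) :=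
          hx.1.share_le_one_sub_gap (by rw [hd0]; norm_num) hd0.le hin
      _ ≤ 1 - (γ ^ 3) ^ (n - k) :=
          sub_le_sub_left (hx.pow_le_gap (by rw [hd0]; norm_num) hd0.le (by positivity) he hin) 1
      _ ≤ 1 - γ ^ (4 * n) := by
          rw [← pow_mul]
          exact sub_le_sub_left (pow_le_pow_of_le_one hγ0.le hγ1 (by omega)) 1
  · linarith [he k hin, pow_le_pow_of_le_one hγ0.le hγ1 (by omega : 3 ≤ 4 * n + 1)]
end

section
/- Feasibility is preserved when the top value increases: suppose x_1 ∈ [0,1] is feasible for the instance with values (d_0, d_1,…,d_n), and let d_0' > d_0. Then x_1 is also feasible for the instance with values (d_0', d_1,…,d_n); moreover, writing x_i, w_i and x_i', w_i' for the upward-equation values in the two instances, one has x_i' ≥ x_i and w_i' > w_i for all i = 1,…,n. -/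
/-- `upP d x1 i = (w_i, w_{i+1})`: the pair of consecutive values reaching nodes
`i` and `i+1`, computed from `x_1 = x1` via the upward equations
`x_{i+1} = 1 − ((1 − x_i)·w_{i−1})/(x_i·w_{i−1} − d_i)`, i.e.
`w_{i+1} = w_i · (1 − (w_{i−1} − w_i)/(w_i − d_i))` (using `w_i = x_i·w_{i−1}`). -/
noncomputable def upP (d : ℕ → ℝ) (x1 : ℝ) : ℕ → ℝ × ℝ
  | 0 => (d 0, d 0 * x1)
  | i + 1 =>
      let p := upP d x1 i
      (p.2, p.2 * (1 - (p.1 - p.2) / (p.2 - d (i + 1))))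

/-- `upW d x1 i = w_i`, the value reaching node `i` under the upward equations
started at `x_1 = x1`. -/
noncomputable def upW (d : ℕ → ℝ) (x1 : ℝ) (i : ℕ) : ℝ :=
  (upP d x1 i).1

/-- `upX d x1 i = x_i`, the share on edge `e_i` computed from `x_1 = x1` by the
upward equations `x_{i+1} = 1 − ((1 − x_i)·w_{i−1})/(x_i·w_{i−1} − d_i)`
(rewritten as `x_{i+1} = 1 − (w_{i−1} − w_i)/(w_i − d_i)`). -/
noncomputable def upX (d : ℕ → ℝ) (x1 : ℝ) : ℕ → ℝ
  | 0 => 1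
  | 1 => x1
  | i + 2 => 1 - (upW d x1 i - upW d x1 (i + 1)) / (upW d x1 (i + 1) - d (i + 1))

/-- `x1` is feasible: `x1 ∈ [0,1]` and the values produced by the upward
equations satisfy `x_i ∈ [0,1]` and `w_i > d_i` for all `i = 1,…,n`. -/
def Feasible (n : ℕ) (d : ℕ → ℝ) (x1 : ℝ) : Prop :=
  0 ≤ x1 ∧ x1 ≤ 1 ∧
    ∀ i, 1 ≤ i → i ≤ n → (0 ≤ upX d x1 i ∧ upX d x1 i ≤ 1) ∧ d i < upW d x1 i

/-!
Raising the top value moves the whole upward recursion up. Written as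
`x_{i+1} = 1 - (1 - x_i) / (x_i - d_i / w_{i-1})`, the next share is increasing in both the
previous share `x_i` and the previous value `w_{i-1}` (as long as `d_i ≥ 0`) and decreasing in
`d_i`, and `w_i = w_{i-1} x_i` is increasing in `w_{i-1}` and `x_i` as well. Starting from `w_0 < w_0'` and `x_1 = x_1'`,
an induction along the path gives `x_i ≤ x_i'` and `w_i < w_i'`, and feasibility transfers since
`d_i < w_i < w_i'`.
-/

/-- The share `x_{i+1}` produced by the upward equation from `w_{i-1} = w`, `x_i = x`, `d_i = e`. -/
noncomputable def nextShare (w x e : ℝ) : ℝ :=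
  1 - (1 - x) / (x - e / w)

lemma nextShare_le_nextShare {w w' x x' e e' : ℝ} (hw : 0 < w) (hww' : w ≤ w') (hxx' : x ≤ x')
    (hx' : x' ≤ 1) (he : 0 ≤ e) (hee' : e' ≤ e) (hex : e < w * x) :
    nextShare w x e ≤ nextShare w' x' e' := by
  have hden : 0 < x - e / w := by rw [sub_pos, div_lt_iff₀' hw]; exact hex
  have hdiv : e' / w' ≤ e / w := calc
    e' / w' ≤ e / w' := by gcongr; linarith
    _ ≤ e / w := by gcongr
  unfold nextShare
  gcongr 1 - ?_
  exact div_le_div₀ (by linarith) (by linarith) hden (by linarith)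

lemma nextShare_le_one {w x e : ℝ} (hw : 0 < w) (hx : x ≤ 1) (hex : e < w * x) :
    nextShare w x e ≤ 1 := by
  have hden : 0 < x - e / w := by rw [sub_pos, div_lt_iff₀' hw]; exact hex
  exact sub_le_self _ (div_nonneg (by linarith) hden.le)

section Upward

variable {n : ℕ} {d d' : ℕ → ℝ} {x1 : ℝ}

lemma upW_succ (d : ℕ → ℝ) (x1 : ℝ) (i : ℕ) :
    upW d x1 (i + 1) = upW d x1 i * upX d x1 (i + 1) := by
  cases i <;> rfl

lemma upX_succ_succ {i : ℕ} (hw : upW d x1 i ≠ 0) :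
    upX d x1 (i + 2) = nextShare (upW d x1 i) (upX d x1 (i + 1)) (d (i + 1)) := by
  change 1 - (upW d x1 i - upW d x1 (i + 1)) / (upW d x1 (i + 1) - d (i + 1)) = _
  rw [nextShare, upW_succ, ← mul_div_mul_left (1 - _) _ hw]
  congr 2 <;> field_simp

lemma Feasible.upW_pos (hfeas : Feasible n d x1) (hd0 : 0 < d 0)
    (hd : ∀ i, 1 ≤ i → i ≤ n → 0 ≤ d i) {i : ℕ} (hi : i ≤ n) : 0 < upW d x1 i := by
  rcases Nat.eq_zero_or_pos i with rfl | hi1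
  · exact hd0
  · exact (hd i hi1 hi).trans_lt (hfeas.2.2 i hi1 hi).2

lemma upW_succ_lt_upW_succ {i : ℕ} (hw : 0 < upW d x1 i) (hww' : upW d x1 i < upW d' x1 i)
    (hxx' : upX d x1 (i + 1) ≤ upX d' x1 (i + 1)) (hpos : 0 < upW d x1 (i + 1)) :
    upW d x1 (i + 1) < upW d' x1 (i + 1) := by
  rw [upW_succ] at hpos
  rw [upW_succ, upW_succ]
  exact mul_lt_mul hww' hxx' (pos_of_mul_pos_right hpos hw.le) (hw.trans hww').le

theorem Feasible.upward_comparison (hfeas : Feasible n d x1) (hd0 : 0 < d 0)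
    (hd : ∀ i, 1 ≤ i → i ≤ n → 0 ≤ d i) (htop : d 0 < d' 0)
    (hdd' : ∀ i, 1 ≤ i → i ≤ n → d' i ≤ d i) :
    ∀ j, j + 1 ≤ n →
      upW d x1 j < upW d' x1 j ∧ upW d x1 (j + 1) < upW d' x1 (j + 1) ∧
        upX d x1 (j + 1) ≤ upX d' x1 (j + 1) ∧ upX d' x1 (j + 1) ≤ 1 := by
  have hpos : ∀ i ≤ n, 0 < upW d x1 i := fun i => hfeas.upW_pos hd0 hd
  intro j
  induction j with
  | zero =>
    intro h1
    exact ⟨htop, upW_succ_lt_upW_succ hd0 htop le_rfl (hpos 1 h1), le_rfl, hfeas.2.1⟩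
  | succ j ih =>
    intro hj
    obtain ⟨hw, hw₁, hx, hx'⟩ := ih (by omega)
    have he : d (j + 1) < upW d x1 j * upX d x1 (j + 1) := by
      rw [← upW_succ]; exact (hfeas.2.2 (j + 1) (by omega) (by omega)).2
    have he' : d' (j + 1) < upW d' x1 j * upX d' x1 (j + 1) := by
      rw [← upW_succ]
      calc d' (j + 1) ≤ d (j + 1) := hdd' (j + 1) (by omega) (by omega)
        _ < upW d x1 (j + 1) := (hfeas.2.2 (j + 1) (by omega) (by omega)).2
        _ < upW d' x1 (j + 1) := hw₁
    have hw' : 0 < upW d' x1 j := (hpos j (by omega)).trans hw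
    have hxx : upX d x1 (j + 2) ≤ upX d' x1 (j + 2) := by
      rw [upX_succ_succ (hpos j (by omega)).ne', upX_succ_succ hw'.ne']
      exact nextShare_le_nextShare (hpos j (by omega)) hw.le hx hx'
        (hd (j + 1) (by omega) (by omega)) (hdd' (j + 1) (by omega) (by omega)) he
    have hx'' : upX d' x1 (j + 2) ≤ 1 := by
      rw [upX_succ_succ hw'.ne']
      exact nextShare_le_one hw' hx' he'
    exact ⟨hw₁, upW_succ_lt_upW_succ (hpos (j + 1) (by omega)) hw₁ hxx (hpos (j + 2) hj), hxx, hx''⟩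

end Upward

theorem feasible_of_increase_top_general (n : ℕ) (d : ℕ → ℝ)
    (hd0 : 0 < d 0) (hd : ∀ i, 1 ≤ i → i ≤ n → 0 ≤ d i ∧ d i < d 0)
    (x1 : ℝ) (hfeas : Feasible n d x1)
    (d0' : ℝ) (hd0' : d 0 < d0') :
    Feasible n (Function.update d 0 d0') x1 ∧
    ∀ i, 1 ≤ i → i ≤ n →
      upX d x1 i ≤ upX (Function.update d 0 d0') x1 i ∧
      upW d x1 i < upW (Function.update d 0 d0') x1 i := by
  have hupdate : ∀ i, 1 ≤ i → Function.update d 0 d0' i = d i := fun i hi =>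
    Function.update_of_ne (by omega) d0' d
  have hcomp := hfeas.upward_comparison hd0 (fun i h1 h2 => (hd i h1 h2).1)
    (by rwa [Function.update_self]) (fun i h1 _ => (hupdate i h1).le)
  refine ⟨⟨hfeas.1, hfeas.2.1, fun i h1 h2 => ?_⟩, fun i h1 h2 => ?_⟩ <;>
    obtain ⟨j, rfl⟩ : ∃ j, i = j + 1 := ⟨i - 1, by omega⟩ <;>
    obtain ⟨-, hw, hx, hx'⟩ := hcomp j h2
  · refine ⟨⟨(hfeas.2.2 (j + 1) h1 h2).1.1.trans hx, hx'⟩, ?_⟩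
    rw [hupdate _ h1]
    exact (hfeas.2.2 (j + 1) h1 h2).2.trans hw
  · exact ⟨hx, hw⟩

/-- Feasibility is preserved when the top value `d 0` is increased; moreover all
upward shares weakly increase and all upward values strictly increase. -/
theorem feasible_of_increase_top (n : ℕ) (hn : 1 ≤ n) (d : ℕ → ℝ)
    (hd0 : 0 < d 0) (hd : ∀ i, 1 ≤ i → i ≤ n → 0 ≤ d i ∧ d i < d 0)
    (x1 : ℝ) (hfeas : Feasible n d x1)
    (d0' : ℝ) (hd0' : d 0 < d0') :
    Feasible n (Function.update d 0 d0') x1 ∧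
    ∀ i, 1 ≤ i → i ≤ n →
      upX d x1 i ≤ upX (Function.update d 0 d0') x1 i ∧
      upW d x1 i < upW (Function.update d 0 d0') x1 i :=
  feasible_of_increase_top_general n d hd0 hd x1 hfeas d0' hd0'
end

section
/- Shares off the winning paths equal one: let v* = max_l v_l. In any fixed point of the tree bargaining equations, if t is a non-root node such that the subtree rooted at t contains no leaf of value v* (equivalently, the edge from t to its parent lies on no path from a maximum-value leaf to the root), then x_t = 1. -/
/-- A finite rooted tree, given by a parent function: the root is its own
parent, and every node reaches the root by iterating `parent`. -/
structure BTree where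
  V : Type
  [instFintype : Fintype V]
  [instDecEq : DecidableEq V]
  root : V
  parent : V → V
  parent_root : parent root = root
  reaches_root : ∀ t : V, ∃ k : ℕ, parent^[k] t = root

attribute [instance] BTree.instFintype BTree.instDecEq

/-- The children of a node `s`: the non-root nodes whose parent is `s`. -/
def BTree.children (T : BTree) (s : T.V) : Finset T.V :=
  Finset.univ.filter fun t => t ≠ T.root ∧ T.parent t = s

/-- A leaf is a node with no children. -/
def BTree.IsLeaf (T : BTree) (l : T.V) : Prop :=
  T.children l = ∅

/-- Maximum of `f` over a finite set `F`, with value `0` when `F` is empty. -/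
noncomputable def fmax {α : Type*} (F : Finset α) (f : α → ℝ) : ℝ :=
  sSup (insert 0 (f '' (F : Set α)))

/-- `w` is the value function determined by leaf values `v` and shares `x`:
`w l = v l` at each leaf `l`, and `w s = max_{t ∈ children s} x t · w t` at
each internal node `s`. -/
def IsValueFn (T : BTree) (v x w : T.V → ℝ) : Prop :=
  (∀ l, T.IsLeaf l → w l = v l) ∧
  ∀ s, ¬ T.IsLeaf s → w s = fmax (T.children s) fun t => x t * w t

/-- `wexcl T x w s t`: the maximum value reaching `s` from its children other
than `t` (`0` when `t` is the only child). -/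
noncomputable def wexcl (T : BTree) (x w : T.V → ℝ) (s t : T.V) : ℝ :=
  fmax ((T.children s).erase t) fun t' => x t' * w t'

/-- A fixed point of the tree bargaining equations: `x` is a share vector
(`x root = 0`, `x t ∈ [0,1]` off the root), `w` is the induced value function,
and for every non-root `t` with parent `s`:
`(1 − x t)·w t = (1 − x s)·(max(w_{s∖t}, x t · w t) − w_{s∖t})`. -/
def IsTreeFixedPoint (T : BTree) (v x w : T.V → ℝ) : Prop :=
  IsValueFn T v x w ∧
  x T.root = 0 ∧
  (∀ t, t ≠ T.root → 0 ≤ x t ∧ x t ≤ 1) ∧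
  ∀ t, t ≠ T.root →
    (1 - x t) * w t =
      (1 - x (T.parent t)) *
        (max (wexcl T x w (T.parent t) t) (x t * w t) - wexcl T x w (T.parent t) t)

/-!
If a child `u` has share `x u < 1`, the fixed-point equation makes `u` the strict maximum among
its siblings and forces `x (parent u) < 1`, with `w (parent u) = x u · w u ≤ w u`. So if `x t < 1`,
every ancestor of `t` has share below one and value at most `w t < v*`. At the lowest common
ancestor `s` of `t` and a maximum leaf `l*`, the child `c` of `s` towards `l*` is then not the
maximal child, so `x c = 1`; shares equal to one propagate down to `l*`, hence
`v* ≤ w c < w s ≤ w t < v*`.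
-/

section Fmax

variable {α : Type*}

theorem fmax_nonneg (F : Finset α) (f : α → ℝ) : 0 ≤ fmax F f :=
  le_csSup ((F.finite_toSet.image f).insert 0).bddAbove (Set.mem_insert _ _)

theorem le_fmax {F : Finset α} (f : α → ℝ) {a : α} (ha : a ∈ F) : f a ≤ fmax F f :=
  le_csSup ((F.finite_toSet.image f).insert 0).bddAbove (Set.mem_insert_of_mem _ ⟨a, ha, rfl⟩)

theorem fmax_le {F : Finset α} {f : α → ℝ} {b : ℝ} (hb : 0 ≤ b) (h : ∀ a ∈ F, f a ≤ b) :
    fmax F f ≤ b := by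
  refine csSup_le ⟨0, Set.mem_insert _ _⟩ ?_
  rintro y (rfl | ⟨a, ha, rfl⟩)
  · exact hb
  · exact h a ha

theorem fmax_eq_of_erase_le [DecidableEq α] {F : Finset α} {f : α → ℝ} {c : α} (hc : c ∈ F)
    (h : fmax (F.erase c) f ≤ f c) : fmax F f = f c := by
  refine le_antisymm (fmax_le ((fmax_nonneg _ _).trans h) fun a ha => ?_) (le_fmax f hc)
  rcases eq_or_ne a c with rfl | hne
  · exact le_rfl
  · exact (le_fmax f (Finset.mem_erase.2 ⟨hne, ha⟩)).trans h

end Fmax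

namespace BTree

variable {T : BTree}

theorem mem_children {s c : T.V} : c ∈ T.children s ↔ c ≠ T.root ∧ T.parent c = s := by
  simp [children]

theorem mem_children_parent {u : T.V} (hu : u ≠ T.root) : u ∈ T.children (T.parent u) :=
  mem_children.2 ⟨hu, rfl⟩

theorem not_isLeaf_of_mem_children {s c : T.V} (hc : c ∈ T.children s) : ¬ T.IsLeaf s := by
  intro hs
  rw [IsLeaf] at hs
  simp [hs] at hc

/-- `s` lies on the path from `t` to the root, `t` itself included. -/
def IsAncestor (T : BTree) (s t : T.V) : Prop :=
  ∃ k : ℕ, T.parent^[k] t = s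

theorem IsAncestor.refl (t : T.V) : T.IsAncestor t t :=
  ⟨0, rfl⟩

theorem IsAncestor.trans {a b c : T.V} (hab : T.IsAncestor a b) (hbc : T.IsAncestor b c) :
    T.IsAncestor a c := by
  obtain ⟨k, rfl⟩ := hab
  obtain ⟨m, rfl⟩ := hbc
  exact ⟨k + m, Function.iterate_add_apply _ _ _ _⟩

theorem root_isAncestor (t : T.V) : T.IsAncestor T.root t :=
  T.reaches_root t

theorem isAncestor_of_mem_children {s c : T.V} (hc : c ∈ T.children s) : T.IsAncestor s c :=
  ⟨1, (mem_children.1 hc).2⟩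

theorem eq_root_of_iterate_eq {u : T.V} {n : ℕ} (hn : 0 < n) (h : T.parent^[n] u = u) :
    u = T.root := by
  obtain ⟨k, hk⟩ := T.reaches_root u
  have hper : Function.IsPeriodicPt T.parent (n * k) u :=
    Function.IsPeriodicPt.mul_const (m := n) h k
  calc u = T.parent^[n * k] u := hper.symm
    _ = T.parent^[n * k - k] (T.parent^[k] u) := by
      rw [← Function.iterate_add_apply, Nat.sub_add_cancel (Nat.le_mul_of_pos_left k hn)]
    _ = T.root := by rw [hk, Function.iterate_fixed T.parent_root]

theorem not_isAncestor_of_mem_children {s c : T.V} (hc : c ∈ T.children s) :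
    ¬ T.IsAncestor c s := by
  rintro ⟨k, hk⟩
  obtain ⟨hcr, hcs⟩ := mem_children.1 hc
  refine hcr (eq_root_of_iterate_eq k.succ_pos ?_)
  rw [Function.iterate_succ_apply, hcs, hk]

/-- The subtree of a child is strictly smaller than that of its parent. -/
theorem wellFounded_children : WellFounded fun c s : T.V => c ∈ T.children s := by
  refine Subrelation.wf (fun {c s} hc => ?_) (measure fun s => {u | T.IsAncestor s u}.ncard).wf
  refine Set.ncard_lt_ncard ⟨fun u hu => (isAncestor_of_mem_children hc).trans hu, fun hsub => ?_⟩
    (Set.toFinite _)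
  exact not_isAncestor_of_mem_children hc (hsub (IsAncestor.refl s))

theorem exists_mem_children_isAncestor {s t : T.V} (h : T.IsAncestor s t) (hne : t ≠ s) :
    ∃ c ∈ T.children s, T.IsAncestor c t := by
  obtain ⟨k, hk⟩ := h
  induction k generalizing t with
  | zero => exact absurd hk hne
  | succ k ih =>
    rw [Function.iterate_succ_apply] at hk
    have ht : t ≠ T.root := by
      rintro rfl
      rw [T.parent_root, Function.iterate_fixed T.parent_root] at hk
      exact hne hk
    by_cases hp : T.parent t = s
    · exact ⟨t, mem_children.2 ⟨ht, hp⟩, IsAncestor.refl t⟩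
    · obtain ⟨c, hc, hct⟩ := ih hp hk
      exact ⟨c, hc, hct.trans ⟨1, rfl⟩⟩

theorem IsLeaf.eq_of_isAncestor {l u : T.V} (hl : T.IsLeaf l) (h : T.IsAncestor l u) : u = l := by
  by_contra hne
  obtain ⟨c, hc, -⟩ := exists_mem_children_isAncestor h hne
  exact not_isLeaf_of_mem_children hc hl

theorem exists_siblings_isAncestor {a b : T.V} (hab : ¬ T.IsAncestor a b)
    (hba : ¬ T.IsAncestor b a) :
    ∃ s, ∃ c ∈ T.children s, ∃ c' ∈ T.children s,
      c ≠ c' ∧ T.IsAncestor c a ∧ T.IsAncestor c' b := by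
  classical
  have hex : ∃ i, T.IsAncestor (T.parent^[i] a) b := by
    obtain ⟨k, hk⟩ := T.reaches_root a
    exact ⟨k, hk ▸ T.root_isAncestor b⟩
  have hi : 0 < Nat.find hex :=
    Nat.pos_of_ne_zero fun h0 => hab (by simpa [h0] using Nat.find_spec hex)
  have hcb : ¬ T.IsAncestor (T.parent^[Nat.find hex - 1] a) b :=
    Nat.find_min hex (Nat.sub_lt hi one_pos)
  have hc : T.parent^[Nat.find hex - 1] a ∈ T.children (T.parent^[Nat.find hex] a) := by
    refine mem_children.2 ⟨fun h => hcb (h ▸ T.root_isAncestor b), ?_⟩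
    rw [← Function.iterate_succ_apply' T.parent, Nat.succ_eq_add_one, Nat.sub_add_cancel hi]
  obtain ⟨c', hc', hc'b⟩ :=
    exists_mem_children_isAncestor (Nat.find_spec hex) fun h => hba ⟨_, h.symm⟩
  exact ⟨_, _, hc, c', hc', fun h => hcb (h ▸ hc'b), ⟨_, rfl⟩, hc'b⟩

end BTree

open BTree

section ValueFn

variable {T : BTree} {v x w : T.V → ℝ}

theorem IsValueFn.mul_le (hvf : IsValueFn T v x w) {u : T.V} (hu : u ≠ T.root) :
    x u * w u ≤ w (T.parent u) := by
  rw [hvf.2 _ (not_isLeaf_of_mem_children (mem_children_parent hu))]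
  exact le_fmax (fun t => x t * w t) (mem_children_parent hu)

theorem IsValueFn.eq_of_wexcl_le (hvf : IsValueFn T v x w) {u : T.V} (hu : u ≠ T.root)
    (h : wexcl T x w (T.parent u) u ≤ x u * w u) : w (T.parent u) = x u * w u := by
  rw [hvf.2 _ (not_isLeaf_of_mem_children (mem_children_parent hu))]
  exact fmax_eq_of_erase_le (mem_children_parent hu) h

theorem IsValueFn.exists_leaf_le (hvf : IsValueFn T v x w) (hx : ∀ u, u ≠ T.root → x u ≤ 1)
    (hw : ∀ u, 0 ≤ w u) (t : T.V) : ∃ l, T.IsLeaf l ∧ T.IsAncestor t l ∧ w t ≤ v l := by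
  induction t using T.wellFounded_children.induction with | _ s ih
  by_cases hs : T.IsLeaf s
  · exact ⟨s, hs, IsAncestor.refl s, (hvf.1 s hs).le⟩
  obtain ⟨c, hc, hmax⟩ :=
    Finset.exists_max_image (T.children s) w (Finset.nonempty_iff_ne_empty.2 hs)
  obtain ⟨l, hl, hcl, hwl⟩ := ih c hc
  refine ⟨l, hl, (isAncestor_of_mem_children hc).trans hcl, ?_⟩
  have hws : w s ≤ w c := by
    rw [hvf.2 s hs]
    refine fmax_le (hw c) fun a ha => ?_
    exact (mul_le_of_le_one_left (hw a) (hx a (mem_children.1 ha).1)).trans (hmax a ha)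
  exact hws.trans hwl

end ValueFn

namespace IsTreeFixedPoint

variable {T : BTree} {v x w : T.V → ℝ}

theorem wexcl_lt (hfp : IsTreeFixedPoint T v x w) {u : T.V} (hu : u ≠ T.root) (hw : 0 < w u)
    (hx : x u < 1) : wexcl T x w (T.parent u) u < x u * w u ∧ x (T.parent u) < 1 := by
  have heq := hfp.2.2.2 u hu
  have hpos : 0 < (1 - x u) * w u := mul_pos (by linarith) hw
  have hlt : wexcl T x w (T.parent u) u < x u * w u := by
    by_contra! hle
    rw [max_eq_left hle, sub_self, mul_zero] at heq
    exact hpos.ne' heq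
  rw [max_eq_right hlt.le] at heq
  have hshare := (pos_iff_pos_of_mul_pos (heq ▸ hpos)).2 (sub_pos.2 hlt)
  exact ⟨hlt, by linarith⟩

theorem w_pos (hfp : IsTreeFixedPoint T v x w) (hv : ∀ l, T.IsLeaf l → 0 < v l) (t : T.V) :
    0 < w t := by
  induction t using T.wellFounded_children.induction with | _ s ih
  by_cases hs : T.IsLeaf s
  · exact hfp.1.1 s hs ▸ hv s hs
  obtain ⟨c, hc⟩ := Finset.nonempty_iff_ne_empty.2 hs
  obtain ⟨hcr, rfl⟩ := mem_children.1 hc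
  have hxw : 0 < x c * w c := by
    rcases (hfp.2.2.1 c hcr).2.lt_or_eq with hx | hx
    · exact (fmax_nonneg _ _).trans_lt (hfp.wexcl_lt hcr (ih c hc) hx).1
    · rw [hx, one_mul]
      exact ih c hc
  exact hxw.trans_le (hfp.1.mul_le hcr)

theorem lt_one_of_isAncestor (hfp : IsTreeFixedPoint T v x w) (hw : ∀ u, 0 < w u) {s t : T.V}
    (hx : x t < 1) (h : T.IsAncestor s t) : x s < 1 ∧ w s ≤ w t := by
  obtain ⟨k, rfl⟩ := h
  induction k with
  | zero => exact ⟨hx, le_rfl⟩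
  | succ k ih =>
    rw [Function.iterate_succ_apply']
    by_cases hu : T.parent^[k] t = T.root
    · rw [hu, T.parent_root, ← hu]
      exact ih
    obtain ⟨hlt, hxp⟩ := hfp.wexcl_lt hu (hw _) ih.1
    refine ⟨hxp, ?_⟩
    rw [hfp.1.eq_of_wexcl_le hu hlt.le]
    exact (mul_le_of_le_one_left (hw _).le ih.1.le).trans ih.2

theorem eq_one_of_isAncestor (hfp : IsTreeFixedPoint T v x w) (hw : ∀ u, 0 < w u) {a l : T.V}
    (hx : x a = 1) (h : T.IsAncestor a l) : x l = 1 ∧ w l ≤ w a := by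
  obtain ⟨k, hk⟩ := h
  induction k generalizing l with
  | zero =>
    subst hk
    exact ⟨hx, le_rfl⟩
  | succ k ih =>
    rw [Function.iterate_succ_apply] at hk
    obtain ⟨hxp, hwp⟩ := ih hk
    have hl : l ≠ T.root := by
      rintro rfl
      rw [T.parent_root, hfp.2.1] at hxp
      exact zero_ne_one hxp
    have hxl : x l = 1 :=
      (hfp.2.2.1 l hl).2.eq_of_not_lt fun hlt => (hfp.wexcl_lt hl (hw l) hlt).2.ne hxp
    refine ⟨hxl, ?_⟩
    calc w l = x l * w l := by rw [hxl, one_mul]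
      _ ≤ w (T.parent l) := hfp.1.mul_le hl
      _ ≤ w a := hwp

theorem eq_one_of_sibling_lt_one (hfp : IsTreeFixedPoint T v x w) (hw : ∀ u, 0 < w u)
    {s c c' : T.V} (hc : c ∈ T.children s) (hc' : c' ∈ T.children s) (hne : c ≠ c')
    (hx : x c' < 1) : x c = 1 ∧ w c < w s := by
  obtain ⟨hcr, rfl⟩ := mem_children.1 hc
  obtain ⟨hc'r, hpar⟩ := mem_children.1 hc'
  have hlt := (hfp.wexcl_lt hc'r (hw c') hx).1
  rw [hpar] at hlt
  have h₁ : x c * w c < x c' * w c' :=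
    (le_fmax (fun t => x t * w t) (Finset.mem_erase.2 ⟨hne, hc⟩)).trans_lt hlt
  have h₂ : x c' * w c' ≤ wexcl T x w (T.parent c) c :=
    le_fmax (fun t => x t * w t) (Finset.mem_erase.2 ⟨hne.symm, hc'⟩)
  have hxc : x c = 1 := (hfp.2.2.1 c hcr).2.eq_of_not_lt fun hlt' =>
    (h₂.trans_lt (hfp.wexcl_lt hcr (hw c) hlt').1).not_gt h₁
  refine ⟨hxc, ?_⟩
  calc w c = x c * w c := by rw [hxc, one_mul]
    _ < x c' * w c' := h₁
    _ ≤ w (T.parent c) := hpar ▸ hfp.1.mul_le hc'r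

end IsTreeFixedPoint

theorem tree_off_path_shares_one_general (T : BTree) (v x w : T.V → ℝ)
    (hv : ∀ l, T.IsLeaf l → 0 < v l)
    (hfp : IsTreeFixedPoint T v x w)
    (lstar : T.V) (hlstar : T.IsLeaf lstar)
    (hmax : ∀ l, T.IsLeaf l → v l ≤ v lstar)
    (t : T.V) (ht : t ≠ T.root)
    (hsub : ∀ l, T.IsLeaf l → (∃ k : ℕ, T.parent^[k] l = t) → v l ≠ v lstar) :
    x t = 1 := by
  have hw := hfp.w_pos hv
  refine (hfp.2.2.1 t ht).2.eq_of_not_lt fun hxt => ?_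
  obtain ⟨l, hl, hlt, hwl⟩ :=
    hfp.1.exists_leaf_le (fun u hu => (hfp.2.2.1 u hu).2) (fun u => (hw u).le) t
  have hwt : w t < v lstar := hwl.trans_lt ((hmax l hl).lt_of_ne (hsub l hl hlt))
  have hts : ¬ T.IsAncestor t lstar := fun h => hsub lstar hlstar h rfl
  have hst : ¬ T.IsAncestor lstar t := fun h => hts (by
    rw [hlstar.eq_of_isAncestor h]
    exact IsAncestor.refl lstar)
  obtain ⟨s, c, hc, c', hc', hne, hcl, hct⟩ := T.exists_siblings_isAncestor hst hts
  obtain ⟨hxc, hwc⟩ := hfp.eq_one_of_sibling_lt_one hw hc hc' hne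
    (hfp.lt_one_of_isAncestor hw hxt hct).1
  have hws : w s ≤ w t :=
    (hfp.lt_one_of_isAncestor hw hxt ((isAncestor_of_mem_children hc').trans hct)).2
  have hvc : w lstar ≤ w c := (hfp.eq_one_of_isAncestor hw hxc hcl).2
  linarith [hfp.1.1 lstar hlstar]

/-- Shares off the winning paths equal one: if the subtree rooted at a non-root
node `t` contains no leaf of maximum value, then `x t = 1` in any fixed point. -/
theorem tree_off_path_shares_one (T : BTree) (v x w : T.V → ℝ)
    (hv : ∀ l, T.IsLeaf l → 0 < v l) (hroot : ¬ T.IsLeaf T.root)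
    (hfp : IsTreeFixedPoint T v x w)
    (lstar : T.V) (hlstar : T.IsLeaf lstar)
    (hmax : ∀ l, T.IsLeaf l → v l ≤ v lstar)
    (t : T.V) (ht : t ≠ T.root)
    (hsub : ∀ l, T.IsLeaf l → (∃ k : ℕ, T.parent^[k] l = t) → v l ≠ v lstar) :
    x t = 1 :=
  tree_off_path_shares_one_general T v x w hv hfp lstar hlstar hmax t ht hsub
end
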